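/- Let V be a 4-dimensional complex vector space with basis x_0,...,x_3. The map δ₁ : V ⊗ Sym³V → Sym²V ⊗ Sym²V defined by A ⊗ B ↦ Σ_{i=0}^{3} (A·x_i) ⊗ (∂B/∂x_i) is injective. -/

import Mathlib

/-!
Write the antisymmetry condition as `∂_q B_p = -∂_p B_q`. The third-order tensor
`T p q r = ∂_q ∂_r B_p` is then symmetric in `(q, r)` (partial derivatives commute) and
antisymmetric in `(p, r)`; a tensor with both properties vanishes, because alternating the two
symmetries six times returns `T p q r` with its sign flipped. So every `∂_r B_p` is a quadratic
form with vanishing gradient, and by Euler's identity a homogeneous polynomial of positive degree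
with vanishing gradient is zero: first `∂_r B_p = 0`, then `B_p = 0`.
-/

open MvPolynomial

namespace MvPolynomial

variable {R σ : Type*}

theorem pderiv_pderiv_comm [CommRing R] (i j : σ) (p : MvPolynomial σ R) :
    pderiv i (pderiv j p) = pderiv j (pderiv i p) := by
  classical
  have hcomm : ⁅pderiv i, pderiv j⁆ = (0 : Derivation R (MvPolynomial σ R) (MvPolynomial σ R)) :=
    derivation_ext fun k => by
      rw [Derivation.commutator_apply]; simp [pderiv_X, Pi.single_apply, apply_ite]
  rw [← sub_eq_zero, ← Derivation.commutator_apply, hcomm, Derivation.zero_apply]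

variable [CommRing R] [IsDomain R] [CharZero R]

theorem IsHomogeneous.eq_zero_of_forall_pderiv_eq_zero [Fintype σ] {φ : MvPolynomial σ R}
    {n : ℕ} (hφ : φ.IsHomogeneous n) (hn : n ≠ 0) (h : ∀ i, pderiv i φ = 0) : φ = 0 := by
  have euler := hφ.sum_X_mul_pderiv
  simp only [h, mul_zero, Finset.sum_const_zero] at euler
  exact nsmul_right_injective hn (by simpa using euler.symm)

theorem pderiv_pderiv_eq_zero_of_antisymm {B : σ → MvPolynomial σ R}
    (h : ∀ p q, pderiv q (B p) + pderiv p (B q) = 0) (p q r : σ) :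
    pderiv q (pderiv r (B p)) = 0 := by
  have anti : ∀ p q r, pderiv q (pderiv r (B p)) = -pderiv q (pderiv p (B r)) := fun p q r => by
    rw [eq_neg_of_add_eq_zero_left (h p r), map_neg]
  refine self_eq_neg.mp ?_
  calc pderiv q (pderiv r (B p))
      = -pderiv q (pderiv p (B r)) := anti p q r
    _ = -pderiv p (pderiv q (B r)) := by rw [pderiv_pderiv_comm]
    _ = pderiv p (pderiv r (B q)) := by rw [anti r p q, neg_neg]
    _ = pderiv r (pderiv p (B q)) := pderiv_pderiv_comm p r _
    _ = -pderiv r (pderiv q (B p)) := anti q r p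
    _ = -pderiv q (pderiv r (B p)) := by rw [pderiv_pderiv_comm]

end MvPolynomial

/-- the map `δ₁ : V ⊗ Sym³V → Sym²V ⊗ Sym²V`,
`A ⊗ B ↦ Σᵢ (A·xᵢ) ⊗ ∂B/∂xᵢ`, is injective.  A general element of `V ⊗ Sym³V` is
`Σ_k x_k ⊗ B k` with `B k ∈ Sym³V`; its image vanishes iff for every degree-2 monomial
`x_p x_q` the coefficient `∂B_p/∂x_q + ∂B_q/∂x_p` (resp. `∂B_p/∂x_p` when `p = q`)
vanishes.  Injectivity says this forces all `B k = 0`. -/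
theorem delta1_injective (B : Fin 4 → MvPolynomial (Fin 4) ℂ)
    (hB : ∀ k, (B k).IsHomogeneous 3)
    (h : ∀ p q : Fin 4, pderiv q (B p) + pderiv p (B q) = 0) :
    ∀ k, B k = 0 := by
  intro k
  have first_derivs : ∀ r, pderiv r (B k) = 0 := fun r =>
    ((hB k).pderiv (i := r)).eq_zero_of_forall_pderiv_eq_zero (by norm_num)
      fun q => pderiv_pderiv_eq_zero_of_antisymm h k q r
  exact (hB k).eq_zero_of_forall_pderiv_eq_zero (by norm_num) first_derivs
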